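/- arXiv:1602.00872 — 5 statements merged into one kernel-verified Lean document; each statement's English description precedes it below -/
import Mathlib

section
/- For real numbers p ≥ 2 and all a, b ∈ ℝ, one has |a - b|^p ≤ 2^{p-2} · (|a|^{p-2} a - |b|^{p-2} b) · (a - b). -/
lemma my_rpow_superadd {p a b : ℝ} (ha : 0 ≤ a) (hb : 0 ≤ b) (hp : 1 ≤ p) :
    a ^ p + b ^ p ≤ (a + b) ^ p := by
  have h := NNReal.add_rpow_le_rpow_add a.toNNReal b.toNNReal hp
  rw [← NNReal.coe_le_coe] at h
  push_cast [NNReal.coe_rpow, Real.coe_toNNReal _ ha, Real.coe_toNNReal _ hb] at h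
  exact h

lemma my_rpow_conv {p a b : ℝ} (ha : 0 ≤ a) (hb : 0 ≤ b) (hp : 1 ≤ p) :
    (a + b) ^ p ≤ 2 ^ (p - 1) * (a ^ p + b ^ p) := by
  have h := NNReal.rpow_add_le_mul_rpow_add_rpow a.toNNReal b.toNNReal hp
  rw [← NNReal.coe_le_coe] at h
  push_cast [NNReal.coe_rpow, Real.coe_toNNReal _ ha, Real.coe_toNNReal _ hb] at h
  exact h

lemma my_phi {p : ℝ} (hp : 2 ≤ p) {x : ℝ} (hx : 0 ≤ x) :
    x ^ (p - 2) * x = x ^ (p - 1) := by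
  rcases eq_or_lt_of_le hx with h | h
  · rw [← h]
    rw [Real.zero_rpow (by linarith : p - 1 ≠ 0), mul_zero]
  · nth_rewrite 2 [← Real.rpow_one x]
    rw [← Real.rpow_add h]
    congr 1; ring

lemma my_aux (p a b : ℝ) (hp : 2 ≤ p) (hab : b ≤ a) (hsum : 0 ≤ a + b) :
    |a - b| ^ p ≤ 2 ^ (p - 2) * ((|a| ^ (p - 2) * a - |b| ^ (p - 2) * b) * (a - b)) := by
  have ha : 0 ≤ a := by linarith
  have habs : |a| = a := abs_of_nonneg ha
  have hd : (0:ℝ) ≤ a - b := by linarith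
  have hdabs : |a - b| = a - b := abs_of_nonneg hd
  have h2 : (1:ℝ) ≤ 2 ^ (p - 2) := by
    rw [show (1:ℝ) = 2 ^ (0:ℝ) by norm_num]
    exact Real.rpow_le_rpow_of_exponent_le one_le_two (by linarith)
  have hdp : |a - b| ^ p = (a - b) ^ (p - 1) * (a - b) := by
    rw [hdabs]
    have h := my_phi (p := p + 1) (by linarith) hd
    rw [show p + 1 - 2 = p - 1 by ring, show p + 1 - 1 = p by ring] at h
    exact h.symm
  rcases le_or_gt 0 b with hb | hb
  · -- both nonneg
    rw [hdp, habs, abs_of_nonneg hb, my_phi hp ha, my_phi hp hb]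
    have key : (a - b) ^ (p - 1) + b ^ (p - 1) ≤ a ^ (p - 1) := by
      have := my_rpow_superadd hd hb (by linarith : 1 ≤ p - 1)
      rwa [sub_add_cancel] at this
    have h1 : (a - b) ^ (p - 1) ≤ 2 ^ (p - 2) * (a ^ (p - 1) - b ^ (p - 1)) := by
      have hb1 : (0:ℝ) ≤ b ^ (p - 1) := Real.rpow_nonneg hb _
      nlinarith [Real.rpow_nonneg hd (p - 1)]
    calc (a - b) ^ (p - 1) * (a - b) ≤ (2 ^ (p - 2) * (a ^ (p - 1) - b ^ (p - 1))) * (a - b) :=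
          mul_le_mul_of_nonneg_right h1 hd
      _ = 2 ^ (p - 2) * ((a ^ (p - 1) - b ^ (p - 1)) * (a - b)) := by ring
  · -- b < 0
    have hc : (0:ℝ) ≤ -b := by linarith
    rw [hdp, habs, abs_of_neg hb, my_phi hp ha]
    have hbterm : (-b) ^ (p - 2) * b = -((-b) ^ (p - 2) * (-b)) := by ring
    rw [hbterm, my_phi hp hc]
    have key : (a + -b) ^ (p - 1) ≤ 2 ^ (p - 2) * (a ^ (p - 1) + (-b) ^ (p - 1)) := by
      have h := my_rpow_conv ha hc (by linarith : 1 ≤ p - 1)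
      calc (a + -b) ^ (p - 1) ≤ 2 ^ (p - 1 - 1) * (a ^ (p - 1) + (-b) ^ (p - 1)) := h
        _ = 2 ^ (p - 2) * (a ^ (p - 1) + (-b) ^ (p - 1)) := by
            congr 2; ring
    have hstep : (a - b) ^ (p - 1) * (a - b)
        ≤ (2 ^ (p - 2) * (a ^ (p - 1) + (-b) ^ (p - 1))) * (a - b) := by
      apply mul_le_mul_of_nonneg_right _ hd
      calc (a - b) ^ (p - 1) = (a + -b) ^ (p - 1) := by ring_nf
        _ ≤ _ := key
    calc (a - b) ^ (p - 1) * (a - b) ≤ _ := hstep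
      _ = 2 ^ (p - 2) * ((a ^ (p - 1) - -(-b) ^ (p - 1)) * (a - b)) := by ring

/-- For p ≥ 2 and all a, b ∈ ℝ: |a - b|^p ≤ 2^(p-2) (|a|^(p-2) a - |b|^(p-2) b)(a - b). -/
theorem stmt_0 (p a b : ℝ) (hp : 2 ≤ p) :
    |a - b| ^ p ≤ 2 ^ (p - 2) * ((|a| ^ (p - 2) * a - |b| ^ (p - 2) * b) * (a - b)) := by
  -- reduce by symmetry: swap (a,b) and negate
  have main : ∀ x y : ℝ, y ≤ x →
      |x - y| ^ p ≤ 2 ^ (p - 2) * ((|x| ^ (p - 2) * x - |y| ^ (p - 2) * y) * (x - y)) := by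
    intro x y hxy
    rcases le_or_gt 0 (x + y) with hs | hs
    · exact my_aux p x y hp hxy hs
    · have h := my_aux p (-y) (-x) hp (by linarith) (by linarith)
      have e1 : |(-y) - (-x)| = |x - y| := by rw [show -y - -x = x - y by ring]
      rw [e1, abs_neg, abs_neg] at h
      calc |x - y| ^ p ≤ 2 ^ (p - 2) * ((|y| ^ (p - 2) * (-y) - |x| ^ (p - 2) * (-x)) * (-y - -x)) := h
        _ = 2 ^ (p - 2) * ((|x| ^ (p - 2) * x - |y| ^ (p - 2) * y) * (x - y)) := by ring
  rcases le_total b a with h | h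
  · exact main a b h
  · have := main b a h
    rw [abs_sub_comm] at this
    calc |a - b| ^ p ≤ 2 ^ (p - 2) * ((|b| ^ (p - 2) * b - |a| ^ (p - 2) * a) * (b - a)) := this
      _ = 2 ^ (p - 2) * ((|a| ^ (p - 2) * a - |b| ^ (p - 2) * b) * (a - b)) := by ring
end

section
/- Let 1 < p < ∞ and let g : ℝ → ℝ be an increasing C¹ function with g' ≥ 0, and define G(t) = ∫₀ᵗ (g'(τ))^{1/p} dτ. Then for all a, b ∈ ℝ, |G(a) - G(b)|^p ≤ |a - b|^{p-2} (a - b) (g(a) - g(b)). -/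
open MeasureTheory intervalIntegral

lemma key_holder (p : ℝ) (hp : 1 < p) (g : ℝ → ℝ) (hg : ContDiff ℝ 1 g)
    (hg' : ∀ x, 0 ≤ deriv g x) (a b : ℝ) (hba : b < a) :
    (∫ τ in b..a, (deriv g τ) ^ (1 / p)) ^ p ≤ (a - b) ^ (p - 1) * (g a - g b) := by
  have ppos : (0:ℝ) < p := lt_trans one_pos hp
  have hq : p.HolderConjugate (p / (p - 1)) := Real.HolderConjugate.conjExponent hp
  set q : ℝ := p / (p - 1) with hqdef
  have hcont : Continuous (deriv g) := hg.continuous_deriv le_rfl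
  set f : ℝ → ℝ := fun τ => (deriv g τ) ^ (1 / p) with hf
  have hfc : Continuous f := hcont.rpow_const (fun x => Or.inr (by positivity))
  set μ := volume.restrict (Set.Ioc b a) with hμ
  obtain ⟨C, hC⟩ := (isCompact_Icc (a := b) (b := a)).exists_bound_of_continuousOn
    hfc.continuousOn
  have hmemf : MemLp f (ENNReal.ofReal p) μ := by
    refine MemLp.of_bound hfc.aestronglyMeasurable C ?_
    refine (ae_restrict_iff' measurableSet_Ioc).2 (ae_of_all _ fun x hx => ?_)
    exact hC x (Set.Ioc_subset_Icc_self hx)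
  have hmem1 : MemLp (fun _ : ℝ => (1:ℝ)) (ENNReal.ofReal q) μ := memLp_const 1
  have hH := integral_mul_le_Lp_mul_Lq_of_nonneg (μ := μ) hq
    (ae_of_all _ fun x => Real.rpow_nonneg (hg' x) _)
    (ae_of_all _ fun _ => zero_le_one) hmemf hmem1
  simp only [mul_one] at hH
  have hfp : ∀ x, f x ^ p = deriv g x := by
    intro x
    simp only [hf]
    rw [← Real.rpow_mul (hg' x), one_div_mul_cancel ppos.ne', Real.rpow_one]
  have h1 : (∫ x, f x ^ p ∂μ) = g a - g b := by
    simp only [hfp, hμ]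
    rw [← intervalIntegral.integral_of_le hba.le]
    exact intervalIntegral.integral_deriv_eq_sub (fun x _ => (hg.differentiable one_ne_zero) x)
      (hcont.intervalIntegrable b a)
  have hX : 0 ≤ g a - g b := by
    rw [← h1]
    exact integral_nonneg fun x => Real.rpow_nonneg (Real.rpow_nonneg (hg' x) _) _
  have hY : (0:ℝ) ≤ a - b := by linarith
  have h2 : (∫ _x, (1:ℝ) ^ q ∂μ) = a - b := by
    simp [hμ, Real.one_rpow, Real.volume_Ioc, ENNReal.toReal_ofReal hY, hba.le]
  rw [h1, h2] at hH
  have hIeq : (∫ τ in b..a, f τ) = ∫ x, f x ∂μ :=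
    intervalIntegral.integral_of_le hba.le
  have hInn : 0 ≤ ∫ x, f x ∂μ :=
    integral_nonneg fun x => Real.rpow_nonneg (hg' x) _
  have hpq1 : 1 / q * p = p - 1 := by rw [← hq.div_conj_eq_sub_one]; ring
  calc (∫ τ in b..a, f τ) ^ p
      ≤ ((g a - g b) ^ (1/p) * (a - b) ^ (1/q)) ^ p := by
        rw [hIeq]; exact Real.rpow_le_rpow hInn hH ppos.le
    _ = ((g a - g b) ^ (1/p)) ^ p * ((a - b) ^ (1/q)) ^ p :=
        Real.mul_rpow (Real.rpow_nonneg hX _) (Real.rpow_nonneg hY _)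
    _ = (g a - g b) * (a - b) ^ (p - 1) := by
        rw [← Real.rpow_mul hX, ← Real.rpow_mul hY, one_div_mul_cancel ppos.ne',
          Real.rpow_one, hpq1]
    _ = (a - b) ^ (p - 1) * (g a - g b) := mul_comm _ _

lemma stmt_2_aux (p : ℝ) (hp : 1 < p) (g : ℝ → ℝ) (hg : ContDiff ℝ 1 g)
    (hg' : ∀ x, 0 ≤ deriv g x)
    (G : ℝ → ℝ) (hG : ∀ t, G t = ∫ τ in (0:ℝ)..t, (deriv g τ) ^ (1 / p))
    (a b : ℝ) (hba : b ≤ a) :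
    |G a - G b| ^ p ≤ |a - b| ^ (p - 2) * (a - b) * (g a - g b) := by
  have ppos : (0:ℝ) < p := lt_trans one_pos hp
  rcases eq_or_lt_of_le hba with rfl | hba
  · simp [Real.zero_rpow ppos.ne']
  · set f : ℝ → ℝ := fun τ => (deriv g τ) ^ (1 / p) with hf
    have hfc : Continuous f :=
      (hg.continuous_deriv le_rfl).rpow_const (fun x => Or.inr (by positivity))
    have hGd : G a - G b = ∫ τ in b..a, f τ := by
      rw [hG a, hG b]
      exact intervalIntegral.integral_interval_sub_left
        (hfc.intervalIntegrable _ _) (hfc.intervalIntegrable _ _)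
    have hInn : 0 ≤ ∫ τ in b..a, f τ :=
      intervalIntegral.integral_nonneg hba.le fun x _ => Real.rpow_nonneg (hg' x) _
    have habs : |G a - G b| = ∫ τ in b..a, f τ := by rw [hGd, abs_of_nonneg hInn]
    have hab : (0:ℝ) < a - b := by linarith
    have habs2 : |a - b| = a - b := abs_of_pos hab
    rw [habs, habs2]
    have hexp : (a - b) ^ (p - 2) * (a - b) = (a - b) ^ (p - 1) := by
      nth_rewrite 2 [← Real.rpow_one (a - b)]
      rw [← Real.rpow_add hab]; ring_nf
    rw [mul_assoc, ← mul_assoc, hexp]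
    exact key_holder p hp g hg hg' a b hba

/-- For 1 < p < ∞, g : ℝ → ℝ increasing, C¹ with g' ≥ 0, and
G(t) = ∫₀ᵗ (g'(τ))^(1/p) dτ, one has
|G(a) - G(b)|^p ≤ |a - b|^(p-2) (a - b)(g(a) - g(b)) for all a, b. -/
theorem stmt_2 (p : ℝ) (hp : 1 < p) (g : ℝ → ℝ) (hg : ContDiff ℝ 1 g)
    (hmono : Monotone g) (hg' : ∀ x, 0 ≤ deriv g x)
    (G : ℝ → ℝ) (hG : ∀ t, G t = ∫ τ in (0:ℝ)..t, (deriv g τ) ^ (1 / p))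
    (a b : ℝ) :
    |G a - G b| ^ p ≤ |a - b| ^ (p - 2) * (a - b) * (g a - g b) := by
  rcases le_total b a with h | h
  · exact stmt_2_aux p hp g hg hg' G hG a b h
  · have := stmt_2_aux p hp g hg hg' G hG b a h
    rw [abs_sub_comm (G b), abs_sub_comm b a] at this
    calc |G a - G b| ^ p ≤ |a - b| ^ (p - 2) * (b - a) * (g b - g a) := this
      _ = |a - b| ^ (p - 2) * (a - b) * (g a - g b) := by ring
end

section
/- Let 1 < p < ∞, let f : ℝ → ℝ be a C¹ convex function, let a, b ∈ ℝ and A, B ≥ 0. Then |f(a) - f(b)|^{p-2} (f(a) - f(b)) (A - B) ≤ |a - b|^{p-2} (a - b) (A |f'(a)|^{p-2} f'(a) - B |f'(b)|^{p-2} f'(b)). -/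
private lemma rpow_split {p u : ℝ} (hu : 0 < u) : u ^ (p - 1) = u ^ (p - 2) * u := by
  rw [show p - 1 = p - 2 + 1 by ring, Real.rpow_add hu, Real.rpow_one]

private lemma odd_pow_mono {p : ℝ} (hp : 1 < p) :
    Monotone (fun t : ℝ => |t| ^ (p - 2) * t) := by
  have hp1 : 0 < p - 1 := by linarith
  have key : ∀ t : ℝ, 0 ≤ t → |t| ^ (p - 2) * t = t ^ (p - 1) := by
    intro t ht
    rcases eq_or_lt_of_le ht with rfl | ht'
    · simp [Real.zero_rpow (by linarith : p - 1 ≠ 0)]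
    · rw [abs_of_pos ht', rpow_split ht']
  intro s t hst
  dsimp only
  rcases le_or_gt 0 s with hs | hs
  · rw [key s hs, key t (hs.trans hst)]
    exact Real.rpow_le_rpow hs hst hp1.le
  · rcases le_or_gt 0 t with ht | ht
    · have h1 : |s| ^ (p - 2) * s ≤ 0 :=
        mul_nonpos_of_nonneg_of_nonpos (Real.rpow_nonneg (abs_nonneg s) _) hs.le
      have h2 : 0 ≤ |t| ^ (p - 2) * t :=
        mul_nonneg (Real.rpow_nonneg (abs_nonneg t) _) ht
      linarith
    · have hs' : |s| ^ (p - 2) * s = -(|s| ^ (p - 1)) := by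
        rw [abs_of_neg hs, rpow_split (neg_pos.mpr hs)]; ring
      have ht' : |t| ^ (p - 2) * t = -(|t| ^ (p - 1)) := by
        rw [abs_of_neg ht, rpow_split (neg_pos.mpr ht)]; ring
      rw [hs', ht', neg_le_neg_iff]
      exact Real.rpow_le_rpow (abs_nonneg t) (by rw [abs_of_neg hs, abs_of_neg ht]; linarith)
        hp1.le

private lemma odd_pow_mul (p : ℝ) (s t : ℝ) :
    |s * t| ^ (p - 2) * (s * t) = (|s| ^ (p - 2) * s) * (|t| ^ (p - 2) * t) := by
  rw [abs_mul, Real.mul_rpow (abs_nonneg s) (abs_nonneg t)]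
  ring

/-- For 1 < p < ∞, f : ℝ → ℝ a C¹ convex function, a, b ∈ ℝ and A, B ≥ 0:
|f(a)-f(b)|^(p-2)(f(a)-f(b))(A-B)
  ≤ |a-b|^(p-2)(a-b)(A |f'(a)|^(p-2) f'(a) - B |f'(b)|^(p-2) f'(b)). -/
theorem stmt_3 (p : ℝ) (hp : 1 < p) (f : ℝ → ℝ) (hf : ContDiff ℝ 1 f)
    (hconv : ConvexOn ℝ Set.univ f) (a b A B : ℝ) (hA : 0 ≤ A) (hB : 0 ≤ B) :
    |f a - f b| ^ (p - 2) * (f a - f b) * (A - B)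
      ≤ |a - b| ^ (p - 2) * (a - b) *
        (A * |deriv f a| ^ (p - 2) * deriv f a - B * |deriv f b| ^ (p - 2) * deriv f b) := by
  have hdiff : Differentiable ℝ f := hf.differentiable one_ne_zero
  -- tangent line inequality: deriv f x * (y - x) ≤ f y - f x
  have tangent : ∀ x y : ℝ, deriv f x * (y - x) ≤ f y - f x := by
    intro x y
    rcases lt_trichotomy x y with h | rfl | h
    · have := hconv.deriv_le_slope (Set.mem_univ x) (Set.mem_univ y) h (hdiff x)
      rw [slope_def_field] at this
      have hy : 0 < y - x := by linarith
      calc deriv f x * (y - x) ≤ (f y - f x) / (y - x) * (y - x) := by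
            exact mul_le_mul_of_nonneg_right this hy.le
        _ = f y - f x := by field_simp
    · simp
    · have := hconv.slope_le_deriv (Set.mem_univ y) (Set.mem_univ x) h (hdiff x)
      rw [slope_def_field] at this
      have hx : 0 < x - y := by linarith
      have := mul_le_mul_of_nonneg_right this hx.le
      rw [div_mul_cancel₀ _ hx.ne'] at this
      nlinarith
  have key1 : f a - f b ≤ (a - b) * deriv f a := by
    have := tangent a b; nlinarith
  have key2 : (a - b) * deriv f b ≤ f a - f b := by
    have := tangent b a; nlinarith
  have m1 := odd_pow_mono hp key1
  have m2 := odd_pow_mono hp key2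
  simp only [odd_pow_mul p (a - b)] at m1 m2
  nlinarith [mul_le_mul_of_nonneg_left m1 hA, mul_le_mul_of_nonneg_left m2 hB]
end

section
/- Let p ≥ 2, 0 < q < 1, α > p - 1, λ > 0, A > 0, B > 0, C > 0 and define φ(t) = (t^p/p) A - λ (t^{1-q}/(1-q)) C - (t^{α+1}/(α+1)) B for t > 0. If λ C < m(t_max), where m(t) = t^{p-1+q} A - t^{α+q} B and t_max = ((p-1+q)A/((α+q)B))^{1/(α+1-p)}, then φ' has exactly two zeros 0 < t₁ < t_max < t₂ on (0,∞), with φ''(t₁) > 0 and φ''(t₂) < 0. -/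
open Real Set

/-- Fibering map analysis: for p ≥ 2, 0 < q < 1, α > p-1, λ > 0, A, B, C > 0 and
φ(t) = (t^p/p)A - λ(t^(1-q)/(1-q))C - (t^(α+1)/(α+1))B, if λC < m(t_max) then φ' has
exactly two zeros 0 < t₁ < t_max < t₂ with φ''(t₁) > 0 and φ''(t₂) < 0. -/
theorem stmt_6 (p q α lam A B C : ℝ) (hp : 2 ≤ p) (hq : 0 < q) (hq1 : q < 1)
    (hα : p - 1 < α) (hlam : 0 < lam) (hA : 0 < A) (hB : 0 < B) (hC : 0 < C)
    (φ : ℝ → ℝ)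
    (hφ : ∀ t, φ t = t ^ p / p * A - lam * (t ^ (1 - q) / (1 - q)) * C
        - t ^ (α + 1) / (α + 1) * B)
    (m : ℝ → ℝ) (hm : ∀ t, m t = t ^ (p - 1 + q) * A - t ^ (α + q) * B)
    (tmax : ℝ) (htmax : tmax = ((p - 1 + q) * A / ((α + q) * B)) ^ (1 / (α + 1 - p)))
    (hsmall : lam * C < m tmax) :
    ∃ t₁ t₂ : ℝ, 0 < t₁ ∧ t₁ < tmax ∧ tmax < t₂ ∧
      deriv φ t₁ = 0 ∧ deriv φ t₂ = 0 ∧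
      (∀ t ∈ Set.Ioi (0:ℝ), deriv φ t = 0 → t = t₁ ∨ t = t₂) ∧
      0 < deriv (deriv φ) t₁ ∧ deriv (deriv φ) t₂ < 0 := by
  have hmfun : m = fun t : ℝ => t ^ (p - 1 + q) * A - t ^ (α + q) * B := funext hm
  have hφfun : φ = fun t : ℝ => t ^ p / p * A - lam * (t ^ (1 - q) / (1 - q)) * C
      - t ^ (α + 1) / (α + 1) * B := funext hφ
  have hr : (0:ℝ) < p - 1 + q := by linarith
  have hs : (0:ℝ) < α + q := by linarith
  have hδ : (0:ℝ) < α + 1 - p := by linarith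
  have hp0 : (0:ℝ) < p := by linarith
  have h1q : (0:ℝ) < 1 - q := by linarith
  have hα1 : (0:ℝ) < α + 1 := by linarith
  have hK : 0 < (p - 1 + q) * A / ((α + q) * B) := by positivity
  have htm : 0 < tmax := htmax ▸ Real.rpow_pos_of_pos hK _
  have h0C : (0:ℝ) < lam * C := by positivity
  have htmδ : tmax ^ (α + 1 - p) = (p - 1 + q) * A / ((α + q) * B) := by
    rw [htmax, one_div, Real.rpow_inv_rpow hK.le hδ.ne']
  -- sign lemmas
  have hsign : ∀ t : ℝ, 0 ≤ t →
      (0 < (p - 1 + q) * A - (α + q) * B * t ^ (α + 1 - p) ↔ t < tmax) := by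
    intro t ht
    rw [sub_pos, mul_comm, ← lt_div_iff₀ (by positivity), ← htmδ,
      Real.rpow_lt_rpow_iff ht htm.le hδ]
  have hsign' : ∀ t : ℝ, 0 ≤ t →
      ((p - 1 + q) * A - (α + q) * B * t ^ (α + 1 - p) < 0 ↔ tmax < t) := by
    intro t ht
    rw [sub_neg, show (α + q) * B * t ^ (α + 1 - p) = t ^ (α + 1 - p) * ((α + q) * B)
      from mul_comm _ _, ← div_lt_iff₀ (by positivity), ← htmδ,
      Real.rpow_lt_rpow_iff htm.le ht hδ]
  -- derivative of m
  have hmder : ∀ t : ℝ, 0 < t → HasDerivAt m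
      (t ^ (p - 1 + q - 1) * ((p - 1 + q) * A - (α + q) * B * t ^ (α + 1 - p))) t := by
    intro t ht
    rw [hmfun]
    have h1 := (Real.hasDerivAt_rpow_const (p := p - 1 + q) (Or.inl ht.ne')).mul_const A
    have h2 := (Real.hasDerivAt_rpow_const (p := α + q) (Or.inl ht.ne')).mul_const B
    refine (h1.sub h2).congr_deriv (Eq.symm ?_)
    rw [show α + q - 1 = (p - 1 + q - 1) + (α + 1 - p) by ring, Real.rpow_add ht]
    ring
  have hmc : Continuous m := by
    rw [hmfun]
    exact ((Real.continuous_rpow_const hr.le).mul continuous_const).sub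
      ((Real.continuous_rpow_const hs.le).mul continuous_const)
  -- monotonicity
  have hMono : StrictMonoOn m (Set.Ioc 0 tmax) := by
    apply strictMonoOn_of_deriv_pos (convex_Ioc 0 tmax) hmc.continuousOn
    intro x hx
    rw [interior_Ioc] at hx
    rw [(hmder x hx.1).deriv]
    exact mul_pos (Real.rpow_pos_of_pos hx.1 _) ((hsign x hx.1.le).2 hx.2)
  have hAnti : StrictAntiOn m (Set.Ici tmax) := by
    apply strictAntiOn_of_deriv_neg (convex_Ici tmax) hmc.continuousOn
    intro x hx
    rw [interior_Ici] at hx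
    have hx0 : 0 < x := htm.trans hx
    rw [(hmder x hx0).deriv]
    exact mul_neg_of_pos_of_neg (Real.rpow_pos_of_pos hx0 _) ((hsign' x hx0.le).2 hx)
  -- existence of t₁
  have hm0 : m 0 = 0 := by
    rw [hm]; rw [Real.zero_rpow hr.ne', Real.zero_rpow hs.ne']; ring
  obtain ⟨t₁, ht₁mem, ht₁⟩ := intermediate_value_Ioo htm.le hmc.continuousOn
    (show lam * C ∈ Ioo (m 0) (m tmax) from ⟨by rw [hm0]; exact h0C, hsmall⟩)
  -- existence of t₂
  set T : ℝ := max (tmax + 1) (max 1 ((2 * A / B) ^ (1 / (α + 1 - p)))) with hT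
  have hTt : tmax < T := lt_of_lt_of_le (by linarith) (le_max_left _ _)
  have hT1 : (1:ℝ) ≤ T := le_trans (le_max_left _ _) (le_max_right _ _)
  have hT0 : (0:ℝ) < T := lt_of_lt_of_le one_pos hT1
  have hTδ : 2 * A / B ≤ T ^ (α + 1 - p) := by
    have h2 : (2 * A / B) ^ (1 / (α + 1 - p)) ≤ T :=
      le_trans (le_max_right _ _) (le_max_right _ _)
    have := Real.rpow_le_rpow (by positivity) h2 hδ.le
    rwa [one_div, Real.rpow_inv_rpow (by positivity) hδ.ne'] at this
  have hmT : m T < lam * C := by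
    rw [hm]
    have hTr : (1:ℝ) ≤ T ^ (p - 1 + q) := by
      have := Real.rpow_le_rpow zero_le_one hT1 hr.le
      rwa [Real.one_rpow] at this
    have hTs : T ^ (α + q) = T ^ (p - 1 + q) * T ^ (α + 1 - p) := by
      rw [← Real.rpow_add hT0, show p - 1 + q + (α + 1 - p) = α + q by ring]
    have h2A : 2 * A ≤ T ^ (α + 1 - p) * B := by
      have := mul_le_mul_of_nonneg_right hTδ hB.le
      rwa [div_mul_cancel₀ _ hB.ne'] at this
    have hc : A - T ^ (α + 1 - p) * B ≤ -A := by linarith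
    have : T ^ (p - 1 + q) * A - T ^ (α + q) * B
        = T ^ (p - 1 + q) * (A - T ^ (α + 1 - p) * B) := by rw [hTs]; ring
    rw [this]
    have := mul_le_mul_of_nonpos_right hTr (le_trans hc (by linarith))
    nlinarith
  obtain ⟨t₂, ht₂mem, ht₂⟩ := intermediate_value_Ioo' hTt.le hmc.continuousOn
    (show lam * C ∈ Ioo (m T) (m tmax) from ⟨hmT, hsmall⟩)
  have ht₂0 : 0 < t₂ := htm.trans ht₂mem.1
  -- derivative of φ
  have hφd : ∀ t : ℝ, 0 < t → HasDerivAt φ (t ^ (-q) * (m t - lam * C)) t := by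
    intro t ht
    rw [hφfun]
    have h1 := ((Real.hasDerivAt_rpow_const (p := p) (Or.inl ht.ne')).div_const p).mul_const A
    have h2 := (((Real.hasDerivAt_rpow_const (p := 1 - q) (Or.inl ht.ne')).div_const
      (1 - q)).const_mul lam).mul_const C
    have h3 := ((Real.hasDerivAt_rpow_const (p := α + 1) (Or.inl ht.ne')).div_const
      (α + 1)).mul_const B
    refine ((h1.sub h2).sub h3).congr_deriv (Eq.symm ?_)
    rw [hm, show (1:ℝ) - q - 1 = -q by ring, show α + 1 - 1 = α by ring,
      mul_div_cancel_left₀ _ hp0.ne', mul_div_cancel_left₀ _ h1q.ne',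
      mul_div_cancel_left₀ _ hα1.ne']
    have e1 : t ^ (p - 1 + q) = t ^ (p - 1) * t ^ q := Real.rpow_add ht (p - 1) q
    have e2 : t ^ (α + q) = t ^ α * t ^ q := Real.rpow_add ht α q
    have e3 : t ^ (-q) * t ^ q = 1 := by
      rw [← Real.rpow_add ht]; simp
    rw [e1, e2]
    linear_combination (t ^ (p - 1) * A - t ^ α * B) * e3
  have hdφ : ∀ t : ℝ, 0 < t → deriv φ t = t ^ (-q) * (m t - lam * C) :=
    fun t ht => (hφd t ht).deriv
  -- second derivative at critical points
  have hφdd : ∀ t : ℝ, 0 < t → m t = lam * C → deriv (deriv φ) t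
      = t ^ (-q) * (t ^ (p - 1 + q - 1)
        * ((p - 1 + q) * A - (α + q) * B * t ^ (α + 1 - p))) := by
    intro t ht htc
    have hev : deriv φ =ᶠ[nhds t] fun u => u ^ (-q) * (m u - lam * C) := by
      filter_upwards [isOpen_Ioi.mem_nhds (show t ∈ Ioi (0:ℝ) from ht)] with u hu
      exact hdφ u hu
    rw [hev.deriv_eq]
    have hG : HasDerivAt (fun u : ℝ => u ^ (-q) * (m u - lam * C))
        ((-q * t ^ (-q - 1)) * (m t - lam * C) + t ^ (-q) * (t ^ (p - 1 + q - 1)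
          * ((p - 1 + q) * A - (α + q) * B * t ^ (α + 1 - p)))) t :=
      (Real.hasDerivAt_rpow_const (Or.inl ht.ne')).mul ((hmder t ht).sub_const (lam * C))
    rw [hG.deriv, htc]
    ring
  refine ⟨t₁, t₂, ht₁mem.1, ht₁mem.2, ht₂mem.1, ?_, ?_, ?_, ?_, ?_⟩
  · rw [hdφ t₁ ht₁mem.1, ht₁, sub_self, mul_zero]
  · rw [hdφ t₂ ht₂0, ht₂, sub_self, mul_zero]
  · intro t htIoi hd0
    have ht : 0 < t := htIoi
    rw [hdφ t ht] at hd0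
    have hmt : m t = lam * C := by
      rcases mul_eq_zero.1 hd0 with h | h
      · exact absurd h (Real.rpow_pos_of_pos ht _).ne'
      · linarith [sub_eq_zero.1 h]
    by_cases hcase : t ≤ tmax
    · exact Or.inl (hMono.injOn ⟨ht, hcase⟩ ⟨ht₁mem.1, ht₁mem.2.le⟩ (by rw [hmt, ht₁]))
    · exact Or.inr (hAnti.injOn (not_le.1 hcase).le ht₂mem.1.le (by rw [hmt, ht₂]))
  · rw [hφdd t₁ ht₁mem.1 ht₁]
    exact mul_pos (Real.rpow_pos_of_pos ht₁mem.1 _)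
      (mul_pos (Real.rpow_pos_of_pos ht₁mem.1 _) ((hsign t₁ ht₁mem.1.le).2 ht₁mem.2))
  · rw [hφdd t₂ ht₂0 ht₂]
    exact mul_neg_of_pos_of_neg (Real.rpow_pos_of_pos ht₂0 _)
      (mul_neg_of_pos_of_neg (Real.rpow_pos_of_pos ht₂0 _) ((hsign' t₂ ht₂0.le).2 ht₂mem.1))
end

section
/- Let p ≥ 2, 0 < q < 1, α > p - 1, λ > 0, A > 0, B > 0, C > 0 and suppose u satisfies the Nehari N⁺-conditions: A - λ C - B = 0 and (p-1) A + q λ C - α B > 0 (i.e., φ'_u(1) = 0 and φ''_u(1) > 0 with A = ‖u‖^p, C = ∫|u|^{1-q}, B = ∫|u|^{α+1}). Then the energy I(u) = A/p - λ C/(1-q) - B/(α+1) satisfies I(u) ≤ ((1/(α+1)) - (1/p)) ((p+q-1)/(1-q)) A < 0. -/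
/-- If A - λC - B = 0 and (p-1)A + qλC - αB > 0 (the N⁺ conditions), then the energy
I = A/p - λC/(1-q) - B/(α+1) satisfies I ≤ (1/(α+1) - 1/p)((p+q-1)/(1-q)) A < 0. -/
theorem stmt_12 (p q α lam A B C : ℝ) (hp : 2 ≤ p) (hq : 0 < q) (hq1 : q < 1)
    (hα : p - 1 < α) (hlam : 0 < lam) (hA : 0 < A) (hB : 0 < B) (hC : 0 < C)
    (hN : A - lam * C - B = 0) (hN' : 0 < (p - 1) * A + q * lam * C - α * B) :
    A / p - lam * C / (1 - q) - B / (α + 1)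
        ≤ (1 / (α + 1) - 1 / p) * ((p + q - 1) / (1 - q)) * A ∧
    (1 / (α + 1) - 1 / p) * ((p + q - 1) / (1 - q)) * A < 0 := by
  have hqpos : (0:ℝ) < 1 - q := by linarith
  have hp0 : (0:ℝ) < p := by linarith
  have hα0 : (0:ℝ) < α + 1 := by linarith
  have hC' : lam * C = A - B := by linarith
  have hkey : (α + q) * B < (p + q - 1) * A := by nlinarith
  have hp' : p ≠ 0 := ne_of_gt hp0
  have hq' : (1 - q) ≠ 0 := ne_of_gt hqpos
  have hα' : (α + 1) ≠ 0 := ne_of_gt hα0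
  constructor
  · rw [← sub_nonneg]
    have hrw : (1 / (α + 1) - 1 / p) * ((p + q - 1) / (1 - q)) * A -
        (A / p - lam * C / (1 - q) - B / (α + 1)) =
        ((p + q - 1) * A - (α + q) * B) / ((1 - q) * (α + 1)) := by
      rw [hC']; field_simp; ring
    rw [hrw]
    exact div_nonneg (by linarith) (by positivity)
  · have h1 : 1 / (α + 1) - 1 / p < 0 := by
      rw [sub_neg, div_lt_div_iff₀ hα0 hp0]
      linarith
    have h2 : 0 < (p + q - 1) / (1 - q) := div_pos (by linarith) hqpos
    nlinarith [mul_pos h2 hA]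
end
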